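/- arXiv:1910.14561 — 3 statements merged into one kernel-verified Lean document; each statement's English description precedes it below -/
import Mathlib

section
/- Let γ ∈ [0,1) ∪ (1,2], let ε ∈ (0,1), and let z ∈ H¹₀((0,1)) (a weakly differentiable function on (0,1) vanishing at both endpoints, with square-integrable derivative). Then ∫₀¹ (x+ε)^(−γ) |z(x)|² dx ≤ 4/(γ−1)² · ∫₀¹ (x+ε)^(2−γ) |z′(x)|² dx. -/
/-! With `w x = x + c > 0` and `γ ≠ 1`, the function `U = w ^ (1 - γ) / (1 - γ)` has `U' = w ^ (-γ)`.
Integrating `(U z²)'`, which vanishes at both endpoints, gives `∫ w ^ (-γ) z² = -∫ U · 2 z z'`.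
Writing `U · 2 z z' = 2 A B` with `A = w ^ (-γ/2) z` and `B = w ^ (1 - γ/2) z' / (1 - γ)`, the bound
`|2 A B| ≤ A² / 2 + 2 B²` gives `I ≤ I / 2 + 2 / (γ - 1)² · J` for the two weighted integrals,
hence `I ≤ 4 / (γ - 1)² · J`; the same bound makes `U · 2 z z'` integrable. -/

open MeasureTheory Set intervalIntegral

theorem aestronglyMeasurable_of_hasDerivAt {F : Type*} [NormedAddCommGroup F] [NormedSpace ℝ F]
    [CompleteSpace F] {f f' : ℝ → F} {s : Set ℝ} (μ : Measure ℝ) (hs : MeasurableSet s)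
    (hf : ∀ x ∈ s, HasDerivAt f (f' x) x) : AEStronglyMeasurable f' (μ.restrict s) :=
  (aestronglyMeasurable_deriv f _).congr <|
    (ae_restrict_iff' hs).2 <| .of_forall fun x hx => (hf x hx).deriv

section ShiftedWeight

variable {γ c : ℝ}

theorem hasDerivAt_add_const_rpow_one_sub_div {x : ℝ} (hγ : γ ≠ 1) (hx : 0 < x + c) :
    HasDerivAt (fun y => (y + c) ^ (1 - γ) / (1 - γ)) ((x + c) ^ (-γ)) x := by
  have h := (((hasDerivAt_id x).add_const c).rpow_const (p := 1 - γ) (.inl hx.ne')).div_const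
    (1 - γ)
  refine h.congr_deriv ?_
  rw [sub_sub_cancel_left, id, one_mul, mul_div_cancel_left₀ _ (sub_ne_zero.2 hγ.symm)]

theorem abs_rpow_one_sub_div_mul_le {t : ℝ} (hγ : γ ≠ 1) (ht : 0 < t) (u v : ℝ) :
    |t ^ (1 - γ) / (1 - γ) * (2 * u * v)| ≤
      1 / 2 * (t ^ (-γ) * u ^ 2) + 2 / (γ - 1) ^ 2 * (t ^ (2 - γ) * v ^ 2) := by
  set A := t ^ (-γ / 2) * u
  set B := t ^ (1 - γ / 2) * v / (1 - γ)
  have hsplit : ∀ p q : ℝ, t ^ (p + q) = t ^ p * t ^ q := fun p q => Real.rpow_add ht p q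
  have hlhs : t ^ (1 - γ) / (1 - γ) * (2 * u * v) = 2 * A * B := by
    rw [show t ^ (1 - γ) = t ^ (-γ / 2) * t ^ (1 - γ / 2) by rw [← hsplit]; ring_nf]
    simp only [A, B]
    field_simp
  have hA : t ^ (-γ) * u ^ 2 = A ^ 2 := by
    rw [show -γ = -γ / 2 + -γ / 2 by ring, hsplit]; ring
  have hB : 2 / (γ - 1) ^ 2 * (t ^ (2 - γ) * v ^ 2) = 2 * B ^ 2 := by
    rw [show 2 - γ = (1 - γ / 2) + (1 - γ / 2) by ring, hsplit]
    simp only [B]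
    field_simp
    ring
  rw [hlhs, hA, hB, abs_le]
  constructor <;> nlinarith [sq_nonneg (A + 2 * B), sq_nonneg (A - 2 * B)]

variable {a b : ℝ} {z z' : ℝ → ℝ}

theorem continuousOn_add_const_rpow (p : ℝ) (hc : 0 < a + c) :
    ContinuousOn (fun x => (x + c) ^ p) (Icc a b) :=
  (continuous_add_const c).continuousOn.rpow_const fun x hx =>
    .inl (show 0 < x + c by linarith [hx.1]).ne'

theorem intervalIntegrable_rpow_one_sub_div_mul (hab : a ≤ b) (hγ : γ ≠ 1) (hc : 0 < a + c)
    (hz : ∀ x ∈ Icc a b, HasDerivAt z (z' x) x)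
    (hint1 : IntervalIntegrable (fun x => (x + c) ^ (-γ) * z x ^ 2) volume a b)
    (hint2 : IntervalIntegrable (fun x => (x + c) ^ (2 - γ) * z' x ^ 2) volume a b) :
    IntervalIntegrable (fun x => (x + c) ^ (1 - γ) / (1 - γ) * (2 * z x * z' x)) volume a b := by
  refine ((hint1.const_mul (1 / 2)).add (hint2.const_mul (2 / (γ - 1) ^ 2))).mono_fun' ?_ ?_
  · rw [uIoc_of_le hab]
    have hzc : ContinuousOn z (Icc a b) := fun x hx => (hz x hx).continuousAt.continuousWithinAt
    have hcont : ContinuousOn (fun x => (x + c) ^ (1 - γ) / (1 - γ) * (2 * z x)) (Ioc a b) :=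
      (((continuousOn_add_const_rpow _ hc).div_const _).mul (continuousOn_const.mul hzc)).mono
        Ioc_subset_Icc_self
    simpa only [Pi.mul_def, mul_assoc] using (hcont.aestronglyMeasurable measurableSet_Ioc).mul
      (aestronglyMeasurable_of_hasDerivAt volume measurableSet_Ioc fun x hx =>
        hz x (Ioc_subset_Icc_self hx))
  · refine (ae_restrict_iff' measurableSet_uIoc).2 <| .of_forall fun x hx => ?_
    rw [uIoc_of_le hab] at hx
    exact abs_rpow_one_sub_div_mul_le hγ (by linarith [hx.1]) _ _

theorem integral_rpow_neg_mul_sq_eq (hab : a ≤ b) (hγ : γ ≠ 1) (hc : 0 < a + c)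
    (hz : ∀ x ∈ Icc a b, HasDerivAt z (z' x) x) (hza : z a = 0) (hzb : z b = 0)
    (hint : IntervalIntegrable (fun x => (x + c) ^ (-γ) * z x ^ 2) volume a b)
    (hcross : IntervalIntegrable (fun x => (x + c) ^ (1 - γ) / (1 - γ) * (2 * z x * z' x))
      volume a b) :
    ∫ x in a..b, (x + c) ^ (-γ) * z x ^ 2 =
      -∫ x in a..b, (x + c) ^ (1 - γ) / (1 - γ) * (2 * z x * z' x) := by
  have hderiv : ∀ x ∈ uIcc a b, HasDerivAt (fun y => (y + c) ^ (1 - γ) / (1 - γ) * z y ^ 2)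
      ((x + c) ^ (-γ) * z x ^ 2 + (x + c) ^ (1 - γ) / (1 - γ) * (2 * z x * z' x)) x := by
    intro x hx
    rw [uIcc_of_le hab] at hx
    have hz2 : HasDerivAt (fun y => z y ^ 2) (2 * z x * z' x) x := by
      simpa using (hz x hx).fun_pow 2
    exact (hasDerivAt_add_const_rpow_one_sub_div hγ (by linarith [hx.1])).mul hz2
  have hftc := integral_eq_sub_of_hasDerivAt hderiv (hint.add hcross)
  rw [integral_add hint hcross, hza, hzb] at hftc
  linarith

theorem integral_rpow_neg_mul_sq_le (hab : a ≤ b) (hγ : γ ≠ 1) (hc : 0 < a + c)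
    (hz : ∀ x ∈ Icc a b, HasDerivAt z (z' x) x) (hza : z a = 0) (hzb : z b = 0)
    (hint1 : IntervalIntegrable (fun x => (x + c) ^ (-γ) * z x ^ 2) volume a b)
    (hint2 : IntervalIntegrable (fun x => (x + c) ^ (2 - γ) * z' x ^ 2) volume a b) :
    ∫ x in a..b, (x + c) ^ (-γ) * z x ^ 2 ≤
      4 / (γ - 1) ^ 2 * ∫ x in a..b, (x + c) ^ (2 - γ) * z' x ^ 2 := by
  set I := ∫ x in a..b, (x + c) ^ (-γ) * z x ^ 2
  set J := ∫ x in a..b, (x + c) ^ (2 - γ) * z' x ^ 2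
  have hcross := intervalIntegrable_rpow_one_sub_div_mul hab hγ hc hz hint1 hint2
  have hI : I ≤ 1 / 2 * I + 2 / (γ - 1) ^ 2 * J := calc
    I = -∫ x in a..b, (x + c) ^ (1 - γ) / (1 - γ) * (2 * z x * z' x) :=
        integral_rpow_neg_mul_sq_eq hab hγ hc hz hza hzb hint1 hcross
    _ ≤ ∫ x in a..b, |(x + c) ^ (1 - γ) / (1 - γ) * (2 * z x * z' x)| :=
        (neg_le_abs _).trans (abs_integral_le_integral_abs hab)
    _ ≤ ∫ x in a..b, (1 / 2 * ((x + c) ^ (-γ) * z x ^ 2) +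
          2 / (γ - 1) ^ 2 * ((x + c) ^ (2 - γ) * z' x ^ 2)) :=
        integral_mono_on hab hcross.abs ((hint1.const_mul _).add (hint2.const_mul _))
          fun x hx => abs_rpow_one_sub_div_mul_le hγ (by linarith [hx.1]) _ _
    _ = 1 / 2 * I + 2 / (γ - 1) ^ 2 * J := by
        rw [integral_add (hint1.const_mul _) (hint2.const_mul _),
          intervalIntegral.integral_const_mul, intervalIntegral.integral_const_mul]
  linarith [show 4 / (γ - 1) ^ 2 * J = 2 * (2 / (γ - 1) ^ 2 * J) by ring]

end ShiftedWeight

/-- Hardy–Poincaré inequality with shifted weight `(x+ε)^(-γ)` on `(0,1)`. -/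
theorem hardy_poincare_shifted
    (γ ε : ℝ) (hγ : γ ∈ Set.Ico (0:ℝ) 1 ∪ Set.Ioc (1:ℝ) 2) (hε : ε ∈ Set.Ioo (0:ℝ) 1)
    (z z' : ℝ → ℝ)
    (hz : ∀ x ∈ Set.Icc (0:ℝ) 1, HasDerivAt z (z' x) x)
    (hz0 : z 0 = 0) (hz1 : z 1 = 0)
    (hint1 : IntervalIntegrable (fun x => (x + ε) ^ (-γ) * (z x) ^ 2) volume 0 1)
    (hint2 : IntervalIntegrable (fun x => (x + ε) ^ (2 - γ) * (z' x) ^ 2) volume 0 1) :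
    ∫ x in (0:ℝ)..1, (x + ε) ^ (-γ) * (z x) ^ 2 ≤
      4 / (γ - 1) ^ 2 * ∫ x in (0:ℝ)..1, (x + ε) ^ (2 - γ) * (z' x) ^ 2 := by
  have hγ1 : γ ≠ 1 := by
    rcases hγ with h | h
    exacts [h.2.ne, h.1.ne']
  exact integral_rpow_neg_mul_sq_le zero_le_one hγ1 (by simpa using hε.1) hz hz0 hz1 hint1 hint2
end

section
/- Let α ∈ (0,1), β ∈ (1, 2−α], with 3 − 2α − β ≠ 0. Set ε₁ = 1/|3−2α−β|, C¹ = β(α+β−1)(2−α−β) and C² = 4/(3−2α−β)². Then ε₁·C¹ + C¹·C²/(4ε₁) < (α+2β−2)·β. -/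
/-- Key algebraic positivity condition (3.27) for `α ∈ (0,1)`, `β ∈ (1, 2−α]`:
with `ε₁ = 1/|3−2α−β|`, `C¹ = β(α+β−1)(2−α−β)`, `C² = 4/(3−2α−β)²`, one has
`ε₁C¹ + C¹C²/(4ε₁) < (α+2β−2)β`. -/
theorem key_positivity (α β : ℝ) (hα : α ∈ Set.Ioo (0:ℝ) 1)
    (hβ : β ∈ Set.Ioc (1:ℝ) (2 - α)) (hne : 3 - 2*α - β ≠ 0) :
    (1/|3 - 2*α - β|) * (β*(α+β-1)*(2-α-β))
      + (β*(α+β-1)*(2-α-β)) * (4/(3-2*α-β)^2) / (4*(1/|3-2*α-β|))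
      < (α + 2*β - 2)*β := by
  obtain ⟨hα0, hα1⟩ := hα
  obtain ⟨hβ1, hβ2⟩ := hβ
  have hd : (0:ℝ) < 3 - 2*α - β := by nlinarith
  rw [abs_of_pos hd]
  have hb : (0:ℝ) ≤ 2 - α - β := by linarith
  have ha : (0:ℝ) < α + β - 1 := by linarith
  have heq : 1 / (3 - 2*α - β) * (β*(α+β-1)*(2-α-β)) +
      β*(α+β-1)*(2-α-β) * (4/(3-2*α-β)^2) / (4*(1/(3-2*α-β)))
      = 2*(β*(α+β-1)*(2-α-β))/(3-2*α-β) := by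
    field_simp
    ring
  rw [heq, div_lt_iff₀ hd]
  nlinarith [mul_pos (mul_pos (by linarith : (0:ℝ) < β)
    (by linarith : (0:ℝ) < β - 1)) (by linarith : (0:ℝ) < 2 - α)]
end

section
/- Let α ∈ (0,1), ε ∈ (0,1), and let a be a measurable function on (0,1)×(0,T) with |a| ≤ A almost everywhere. Then for every δ > 0 there exists a constant C = C(δ, A, α) (independent of ε) such that for all v(·,t) ∈ H¹₀((0,1)): |∫₀¹ a(x,t) v′(x,t) v(x,t) dx| ≤ δ ∫₀¹ (x+ε)^α |v′(x,t)|² dx + C ∫₀¹ |v(x,t)|² dx. -/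
/-!
With `w = (x + ε) ^ α`, Young's inequality gives pointwise
`A |v'| |v| ≤ δ/2 · w v'² + A²/(2δ) · w⁻¹ v²`, so everything reduces to bounding `∫ w⁻¹ v²`
by a small multiple of `∫ w v'²` plus a multiple of `∫ v²`, uniformly in `ε`.
Since `v 0 = 0`, Cauchy–Schwarz gives `v(x)² ≤ (∫₀ˣ w⁻¹) (∫₀ˣ w v'²)`, and `w⁻¹ ≤ s ^ (-α)`
with `α < 1` yields `v(x)² ≤ x ^ (1 - α) / (1 - α) · ∫₀¹ w v'²`. Splitting `∫₀¹ w⁻¹ v²` at a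
small `κ`, the part over `[0, κ]` is at most `(κ ^ (1 - α) / (1 - α))² ∫₀¹ w v'²` and the part
over `[κ, 1]` at most `κ ^ (-α) ∫₀¹ v²`.
-/

open MeasureTheory Set

theorem sq_integral_mul_le_integral_sq_mul_integral_sq {X : Type*} [MeasurableSpace X]
    {μ : Measure X} {f g : X → ℝ} (hf : MemLp f 2 μ) (hg : MemLp g 2 μ) :
    (∫ x, f x * g x ∂μ) ^ 2 ≤ (∫ x, f x ^ 2 ∂μ) * ∫ x, g x ^ 2 ∂μ := by
  have holder := integral_mul_norm_le_Lp_mul_Lq (p := 2) (q := 2) (μ := μ)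
    Real.HolderConjugate.two_two (by simpa using hf) (by simpa using hg)
  simp only [Real.norm_eq_abs, Real.rpow_two, sq_abs, ← Real.sqrt_eq_rpow] at holder
  have hP : 0 ≤ ∫ x, f x ^ 2 ∂μ := integral_nonneg fun x => sq_nonneg _
  have hQ : 0 ≤ ∫ x, g x ^ 2 ∂μ := integral_nonneg fun x => sq_nonneg _
  calc (∫ x, f x * g x ∂μ) ^ 2 ≤ (∫ x, |f x| * |g x| ∂μ) ^ 2 := by
        rw [← sq_abs]
        gcongr
        simpa only [abs_mul] using abs_integral_le_integral_abs (f := fun x => f x * g x)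
    _ ≤ (√(∫ x, f x ^ 2 ∂μ) * √(∫ x, g x ^ 2 ∂μ)) ^ 2 := by gcongr
    _ = _ := by rw [mul_pow, Real.sq_sqrt hP, Real.sq_sqrt hQ]

theorem mul_mul_le_young {A δ p u w : ℝ} (hδ : 0 < δ) (hp : 0 < p) :
    A * (u * w) ≤ δ / 2 * (p * u ^ 2) + A ^ 2 / (2 * δ) * (p⁻¹ * w ^ 2) := by
  have key : δ / 2 * (p * u ^ 2) + A ^ 2 / (2 * δ) * (p⁻¹ * w ^ 2) - A * (u * w)
      = (δ * p * u - A * w) ^ 2 / (2 * δ * p) := by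
    field_simp
    ring
  have : 0 ≤ (δ * p * u - A * w) ^ 2 / (2 * δ * p) := by positivity
  linarith

theorem sq_le_integral_inv_mul_integral_mul_sq_deriv {v v' w : ℝ → ℝ} {x : ℝ} (hx : 0 ≤ x)
    (hv : ∀ s ∈ Icc 0 x, HasDerivAt v (v' s) s) (hv0 : v 0 = 0)
    (hw : ContinuousOn w (Icc 0 x)) (hw_pos : ∀ s ∈ Icc 0 x, 0 < w s)
    (hwv' : IntervalIntegrable (fun s => w s * v' s ^ 2) volume 0 x) :
    v x ^ 2 ≤ (∫ s in 0..x, (w s)⁻¹) * ∫ s in 0..x, w s * v' s ^ 2 := by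
  set μ := volume.restrict (Ioc 0 x)
  have hIoc : ∀ s ∈ Ioc 0 x, s ∈ Icc 0 x := fun s hs => Ioc_subset_Icc_self hs
  have hsqrt_pos : ∀ s ∈ Ioc 0 x, 0 < √(w s) := fun s hs => Real.sqrt_pos.2 (hw_pos s (hIoc s hs))
  have hsqrt : ContinuousOn (fun s => √(w s)) (Ioc 0 x) := (hw.mono Ioc_subset_Icc_self).sqrt
  have hv' : AEStronglyMeasurable v' μ :=
    (measurable_deriv v).aestronglyMeasurable.congr <|
      (ae_restrict_iff' measurableSet_Ioc).2 <| ae_of_all _ fun s hs => (hv s (hIoc s hs)).deriv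
  have hf : MemLp (fun s => (√(w s))⁻¹) 2 μ := by
    refine (memLp_two_iff_integrable_sq
      ((hsqrt.inv₀ fun s hs => (hsqrt_pos s hs).ne').aestronglyMeasurable measurableSet_Ioc)).2 ?_
    refine (((hw.inv₀ fun s hs => (hw_pos s hs).ne').integrableOn_Icc).mono_set
      Ioc_subset_Icc_self).congr ?_
    refine (ae_restrict_iff' measurableSet_Ioc).2 <| ae_of_all _ fun s hs => ?_
    simp only [Pi.inv_apply, inv_pow, Real.sq_sqrt (hw_pos s (hIoc s hs)).le]
  have hg : MemLp (fun s => √(w s) * v' s) 2 μ := by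
    refine (memLp_two_iff_integrable_sq
      ((hsqrt.aestronglyMeasurable measurableSet_Ioc).mul hv')).2 ?_
    refine ((intervalIntegrable_iff_integrableOn_Ioc_of_le hx).1 hwv').congr ?_
    refine (ae_restrict_iff' measurableSet_Ioc).2 <| ae_of_all _ fun s hs => ?_
    simp only [Pi.mul_apply, mul_pow, Real.sq_sqrt (hw_pos s (hIoc s hs)).le]
  have hv'_eq : ∀ s ∈ Ioc 0 x, (√(w s))⁻¹ * (√(w s) * v' s) = v' s := fun s hs => by
    rw [inv_mul_cancel_left₀ (hsqrt_pos s hs).ne']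
  have hv'_int : IntervalIntegrable v' volume 0 x :=
    (intervalIntegrable_iff_integrableOn_Ioc_of_le hx).2 <|
      (hf.integrable_mul hg).congr <|
        (ae_restrict_iff' measurableSet_Ioc).2 <| ae_of_all _ hv'_eq
  have hvx : v x = ∫ s, (√(w s))⁻¹ * (√(w s) * v' s) ∂μ := by
    rw [setIntegral_congr_fun measurableSet_Ioc hv'_eq, ← intervalIntegral.integral_of_le hx,
      intervalIntegral.integral_eq_sub_of_hasDerivAt
        (fun s hs => hv s (by rwa [uIcc_of_le hx] at hs)) hv'_int, hv0, sub_zero]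
  calc v x ^ 2 ≤ (∫ s, (√(w s))⁻¹ ^ 2 ∂μ) * ∫ s, (√(w s) * v' s) ^ 2 ∂μ :=
        hvx ▸ sq_integral_mul_le_integral_sq_mul_integral_sq hf hg
    _ = (∫ s in 0..x, (w s)⁻¹) * ∫ s in 0..x, w s * v' s ^ 2 := by
        rw [intervalIntegral.integral_of_le hx, intervalIntegral.integral_of_le hx]
        congr 1 <;> refine setIntegral_congr_fun measurableSet_Ioc fun s hs => ?_ <;>
          simp only [inv_pow, mul_pow, Real.sq_sqrt (hw_pos s (hIoc s hs)).le]

theorem continuousOn_inv_add_rpow {α ε : ℝ} (hε : 0 < ε) :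
    ContinuousOn (fun x : ℝ => ((x + ε) ^ α)⁻¹) (Ici 0) := by
  have hpos : ∀ x ∈ Ici (0 : ℝ), 0 < x + ε := fun x hx => by linarith [mem_Ici.1 hx]
  exact ((continuousOn_id.add continuousOn_const).rpow_const fun x hx =>
    Or.inl (hpos x hx).ne').inv₀ fun x hx => (Real.rpow_pos_of_pos (hpos x hx) α).ne'

theorem intervalIntegrable_inv_add_rpow_mul {α ε b : ℝ} {f : ℝ → ℝ} (hε : 0 < ε) (hb : 0 ≤ b)
    (hf : ContinuousOn f (Icc 0 b)) :
    IntervalIntegrable (fun x => ((x + ε) ^ α)⁻¹ * f x) volume 0 b :=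
  (((continuousOn_inv_add_rpow hε).mono Icc_subset_Ici_self).mul hf).intervalIntegrable_of_Icc hb

theorem integral_inv_add_rpow_le {α ε x : ℝ} (hα0 : 0 ≤ α) (hα1 : α < 1) (hε : 0 < ε)
    (hx : 0 ≤ x) : ∫ s in 0..x, ((s + ε) ^ α)⁻¹ ≤ x ^ (1 - α) / (1 - α) := by
  calc ∫ s in 0..x, ((s + ε) ^ α)⁻¹ ≤ ∫ s in 0..x, s ^ (-α) := by
        refine intervalIntegral.integral_mono_on_of_le_Ioo hx
          (((continuousOn_inv_add_rpow hε).mono Icc_subset_Ici_self).intervalIntegrable_of_Icc hx)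
          (intervalIntegral.intervalIntegrable_rpow' (by linarith)) fun s hs => ?_
        rw [← Real.rpow_neg (by linarith [hs.1])]
        exact Real.rpow_le_rpow_of_nonpos hs.1 (by linarith) (by linarith)
    _ = x ^ (1 - α) / (1 - α) := by
        rw [integral_rpow (Or.inl (by linarith)), Real.zero_rpow (by linarith), sub_zero,
          neg_add_eq_sub]

theorem sq_le_rpow_div_mul_integral {α ε x : ℝ} (hα0 : 0 ≤ α) (hα1 : α < 1) (hε : 0 < ε)
    (hx : x ∈ Icc 0 1) {v v' : ℝ → ℝ} (hv : ∀ x ∈ Icc 0 1, HasDerivAt v (v' x) x)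
    (hv0 : v 0 = 0) (hE : IntervalIntegrable (fun x => (x + ε) ^ α * v' x ^ 2) volume 0 1) :
    v x ^ 2 ≤ x ^ (1 - α) / (1 - α) * ∫ s in 0..1, (s + ε) ^ α * v' s ^ 2 := by
  obtain ⟨hx0, hx1⟩ := hx
  have hE_nonneg : ∀ s ∈ Icc (0 : ℝ) 1, 0 ≤ (s + ε) ^ α * v' s ^ 2 :=
    fun s hs => mul_nonneg (Real.rpow_nonneg (by linarith [hs.1]) α) (sq_nonneg _)
  calc v x ^ 2
      ≤ (∫ s in 0..x, ((s + ε) ^ α)⁻¹) * ∫ s in 0..x, (s + ε) ^ α * v' s ^ 2 :=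
        sq_le_integral_inv_mul_integral_mul_sq_deriv hx0
          (fun s hs => hv s ⟨hs.1, hs.2.trans hx1⟩) hv0
          ((continuous_id.add continuous_const).rpow_const fun _ => Or.inr hα0).continuousOn
          (fun s hs => Real.rpow_pos_of_pos (by linarith [hs.1]) α)
          (hE.mono_set (by rw [uIcc_of_le hx0, uIcc_of_le zero_le_one]; gcongr))
    _ ≤ x ^ (1 - α) / (1 - α) * ∫ s in 0..1, (s + ε) ^ α * v' s ^ 2 := by
        gcongr
        · exact intervalIntegral.integral_nonneg hx0 fun s hs =>
            hE_nonneg s ⟨hs.1, hs.2.trans hx1⟩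
        · exact integral_inv_add_rpow_le hα0 hα1 hε hx0
        · exact intervalIntegral.integral_mono_interval le_rfl hx0 hx1
            ((ae_restrict_iff' measurableSet_Ioc).2 <| ae_of_all _ fun s hs =>
              hE_nonneg s (Ioc_subset_Icc_self hs)) hE

theorem integral_inv_add_rpow_mul_sq_le {α ε κ : ℝ} (hα0 : 0 ≤ α) (hα1 : α < 1) (hε : 0 < ε)
    (hκ : κ ∈ Ioc 0 1) {v v' : ℝ → ℝ} (hv : ∀ x ∈ Icc 0 1, HasDerivAt v (v' x) x)
    (hv0 : v 0 = 0) (hE : IntervalIntegrable (fun x => (x + ε) ^ α * v' x ^ 2) volume 0 1) :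
    ∫ x in 0..1, ((x + ε) ^ α)⁻¹ * v x ^ 2 ≤
      (κ ^ (1 - α) / (1 - α)) ^ 2 * (∫ x in 0..1, (x + ε) ^ α * v' x ^ 2)
        + (κ ^ α)⁻¹ * ∫ x in 0..1, v x ^ 2 := by
  obtain ⟨hκ0, hκ1⟩ := hκ
  set E := ∫ x in 0..1, (x + ε) ^ α * v' x ^ 2
  set c := κ ^ (1 - α) / (1 - α)
  have hE0 : 0 ≤ E := intervalIntegral.integral_nonneg zero_le_one fun x hx =>
    mul_nonneg (Real.rpow_nonneg (by linarith [hx.1]) α) (sq_nonneg _)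
  have hv_cont : ContinuousOn v (Icc 0 1) := fun x hx => (hv x hx).continuousAt.continuousWithinAt
  have hint : IntervalIntegrable (fun x => ((x + ε) ^ α)⁻¹ * v x ^ 2) volume 0 1 :=
    intervalIntegrable_inv_add_rpow_mul hε zero_le_one (hv_cont.pow 2)
  have hsq_int : IntervalIntegrable (fun x => v x ^ 2) volume 0 1 :=
    (hv_cont.pow 2).intervalIntegrable_of_Icc zero_le_one
  have hsub₁ : uIcc 0 κ ⊆ uIcc (0 : ℝ) 1 := by
    rw [uIcc_of_le hκ0.le, uIcc_of_le zero_le_one]; gcongr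
  have hsub₂ : uIcc κ 1 ⊆ uIcc (0 : ℝ) 1 := by
    rw [uIcc_of_le hκ1, uIcc_of_le zero_le_one]; gcongr
  have h_near : ∫ x in 0..κ, ((x + ε) ^ α)⁻¹ * v x ^ 2 ≤ c ^ 2 * E :=
    calc ∫ x in 0..κ, ((x + ε) ^ α)⁻¹ * v x ^ 2 ≤ ∫ x in 0..κ, ((x + ε) ^ α)⁻¹ * (c * E) := by
          refine intervalIntegral.integral_mono_on hκ0.le (hint.mono_set hsub₁)
            (intervalIntegrable_inv_add_rpow_mul hε hκ0.le continuousOn_const) fun x hx => ?_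
          have hvx : v x ^ 2 ≤ c * E :=
            (sq_le_rpow_div_mul_integral hα0 hα1 hε ⟨hx.1, hx.2.trans hκ1⟩ hv hv0 hE).trans <|
              mul_le_mul_of_nonneg_right (div_le_div_of_nonneg_right
                (Real.rpow_le_rpow hx.1 hx.2 (by linarith)) (by linarith)) hE0
          exact mul_le_mul_of_nonneg_left hvx
            (inv_nonneg.2 (Real.rpow_nonneg (by linarith [hx.1]) α))
      _ = (∫ x in 0..κ, ((x + ε) ^ α)⁻¹) * (c * E) := intervalIntegral.integral_mul_const _ _
      _ ≤ c * (c * E) := by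
          gcongr
          exact integral_inv_add_rpow_le hα0 hα1 hε hκ0.le
      _ = c ^ 2 * E := by ring
  have h_far : ∫ x in κ..1, ((x + ε) ^ α)⁻¹ * v x ^ 2 ≤ (κ ^ α)⁻¹ * ∫ x in 0..1, v x ^ 2 :=
    calc ∫ x in κ..1, ((x + ε) ^ α)⁻¹ * v x ^ 2 ≤ ∫ x in κ..1, (κ ^ α)⁻¹ * v x ^ 2 := by
          refine intervalIntegral.integral_mono_on hκ1 (hint.mono_set hsub₂)
            ((hsq_int.mono_set hsub₂).const_mul _) fun x hx => ?_
          gcongr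
          linarith [hx.1]
      _ = (κ ^ α)⁻¹ * ∫ x in κ..1, v x ^ 2 := intervalIntegral.integral_const_mul _ _
      _ ≤ (κ ^ α)⁻¹ * ∫ x in 0..1, v x ^ 2 := by
          gcongr
          exact intervalIntegral.integral_mono_interval hκ0.le hκ1 le_rfl
            (ae_of_all _ fun x => sq_nonneg _) hsq_int
  rw [← intervalIntegral.integral_add_adjacent_intervals (hint.mono_set hsub₁)
    (hint.mono_set hsub₂)]
  linarith

open Filter Topology in
theorem exists_integral_inv_add_rpow_mul_sq_le {α η : ℝ} (hα0 : 0 ≤ α) (hα1 : α < 1)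
    (hη : 0 < η) :
    ∃ K > 0, ∀ ε > 0, ∀ v v' : ℝ → ℝ, (∀ x ∈ Icc 0 1, HasDerivAt v (v' x) x) → v 0 = 0 →
      IntervalIntegrable (fun x => (x + ε) ^ α * v' x ^ 2) volume 0 1 →
      ∫ x in 0..1, ((x + ε) ^ α)⁻¹ * v x ^ 2 ≤
        η * (∫ x in 0..1, (x + ε) ^ α * v' x ^ 2) + K * ∫ x in 0..1, v x ^ 2 := by
  have hlim : Tendsto (fun κ : ℝ => (κ ^ (1 - α) / (1 - α)) ^ 2) (𝓝[>] 0) (𝓝 0) := by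
    have hcont : ContinuousAt (fun κ : ℝ => (κ ^ (1 - α) / (1 - α)) ^ 2) 0 :=
      ((Real.continuousAt_rpow_const 0 _ (Or.inr (by linarith))).div_const _).pow 2
    simpa [Real.zero_rpow (by linarith : 1 - α ≠ 0)] using
      hcont.tendsto.mono_left nhdsWithin_le_nhds
  obtain ⟨κ, hκη, hκ⟩ := ((hlim.eventually (ge_mem_nhds hη)).and (Ioc_mem_nhdsGT one_pos)).exists
  refine ⟨(κ ^ α)⁻¹, inv_pos.2 (Real.rpow_pos_of_pos hκ.1 α), fun ε hε v v' hv hv0 hE => ?_⟩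
  refine (integral_inv_add_rpow_mul_sq_le hα0 hα1 hε hκ hv hv0 hE).trans ?_
  gcongr
  exact intervalIntegral.integral_nonneg zero_le_one fun x hx =>
    mul_nonneg (Real.rpow_nonneg (by linarith [hx.1]) α) (sq_nonneg _)

theorem abs_integral_mul_mul_le {c u v w : ℝ → ℝ} {a b A δ : ℝ} (hab : a ≤ b) (hδ : 0 < δ)
    (hw : ∀ x ∈ Ioc a b, 0 < w x) (hc : ∀ᵐ x ∂volume.restrict (Ioc a b), |c x| ≤ A)
    (hu : IntervalIntegrable (fun x => w x * u x ^ 2) volume a b)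
    (hv : IntervalIntegrable (fun x => (w x)⁻¹ * v x ^ 2) volume a b) :
    |∫ x in a..b, c x * u x * v x| ≤
      δ / 2 * (∫ x in a..b, w x * u x ^ 2) + A ^ 2 / (2 * δ) * ∫ x in a..b, (w x)⁻¹ * v x ^ 2 := by
  have hpt : ∀ᵐ x, x ∈ Ioc a b → ‖c x * u x * v x‖ ≤
      δ / 2 * (w x * u x ^ 2) + A ^ 2 / (2 * δ) * ((w x)⁻¹ * v x ^ 2) := by
    rw [← ae_restrict_iff' measurableSet_Ioc]
    filter_upwards [hc, self_mem_ae_restrict measurableSet_Ioc] with x hcx hx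
    calc ‖c x * u x * v x‖ = |c x| * (|u x| * |v x|) := by
          rw [Real.norm_eq_abs, abs_mul, abs_mul, mul_assoc]
      _ ≤ A * (|u x| * |v x|) := by gcongr
      _ ≤ δ / 2 * (w x * |u x| ^ 2) + A ^ 2 / (2 * δ) * ((w x)⁻¹ * |v x| ^ 2) :=
          mul_mul_le_young hδ (hw x hx)
      _ = δ / 2 * (w x * u x ^ 2) + A ^ 2 / (2 * δ) * ((w x)⁻¹ * v x ^ 2) := by
          rw [sq_abs, sq_abs]
  calc |∫ x in a..b, c x * u x * v x|
      ≤ ∫ x in a..b, (δ / 2 * (w x * u x ^ 2) + A ^ 2 / (2 * δ) * ((w x)⁻¹ * v x ^ 2)) :=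
        intervalIntegral.norm_integral_le_of_norm_le hab hpt
          ((hu.const_mul _).add (hv.const_mul _))
    _ = _ := by
        rw [intervalIntegral.integral_add (hu.const_mul _) (hv.const_mul _),
          intervalIntegral.integral_const_mul, intervalIntegral.integral_const_mul]

theorem absorption_estimate_general (α T A : ℝ) (a : ℝ → ℝ → ℝ)
    (hα : α ∈ Set.Ioo (0:ℝ) 1)
    (hbd : ∀ t ∈ Set.Ioo (0:ℝ) T,
      ∀ᵐ x ∂(volume.restrict (Set.Ioo (0:ℝ) 1)), |a x t| ≤ A) :
    ∀ δ > 0, ∃ C > 0, ∀ ε ∈ Set.Ioo (0:ℝ) 1, ∀ t ∈ Set.Ioo (0:ℝ) T,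
      ∀ v v' : ℝ → ℝ,
        (∀ x ∈ Set.Icc (0:ℝ) 1, HasDerivAt v (v' x) x) →
        v 0 = 0 → v 1 = 0 →
        IntervalIntegrable (fun x => a x t * v' x * v x) volume 0 1 →
        IntervalIntegrable (fun x => (x+ε)^α * (v' x)^2) volume 0 1 →
        IntervalIntegrable (fun x => (v x)^2) volume 0 1 →
        |∫ x in (0:ℝ)..1, a x t * v' x * v x| ≤
          δ * ∫ x in (0:ℝ)..1, (x+ε)^α * (v' x)^2
            + C * ∫ x in (0:ℝ)..1, (v x)^2 := by
  intro δ hδ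
  set M := A ^ 2 / (2 * δ)
  set η := δ / 2 / (M + 1)
  have hηM : (M + 1) * η = δ / 2 := mul_div_cancel₀ _ (by positivity)
  obtain ⟨K, hK, hHardy⟩ :=
    exists_integral_inv_add_rpow_mul_sq_le hα.1.le hα.2 (η := η) (by positivity)
  -- The binder of the first integral extends over `+ C * ∫ ...`: the right-hand side is
  -- `δ * (E + C * V)`, so the constant has to be divided by `δ`.
  refine ⟨(M * K + 1) / δ, by positivity, ?_⟩
  rintro ε ⟨hε, -⟩ t ht v v' hv hv0 - - hE -
  set E := ∫ x in (0:ℝ)..1, (x + ε) ^ α * v' x ^ 2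
  set V := ∫ x in (0:ℝ)..1, v x ^ 2
  have hE0 : 0 ≤ E := intervalIntegral.integral_nonneg zero_le_one fun x hx =>
    mul_nonneg (Real.rpow_nonneg (by linarith [hx.1]) α) (sq_nonneg _)
  have hV0 : 0 ≤ V := intervalIntegral.integral_nonneg zero_le_one fun x _ => sq_nonneg _
  have ha : ∀ᵐ x ∂volume.restrict (Ioc 0 1), |a x t| ≤ A := by
    simpa only [Measure.restrict_congr_set Ioo_ae_eq_Ioc] using hbd t ht
  have hW := intervalIntegrable_inv_add_rpow_mul (α := α) (f := fun x => v x ^ 2) hε zero_le_one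
    ((continuousOn_of_forall_continuousAt fun x hx => (hv x hx).continuousAt).pow 2)
  calc |∫ x in (0:ℝ)..1, a x t * v' x * v x|
      ≤ δ / 2 * E + M * ∫ x in (0:ℝ)..1, ((x + ε) ^ α)⁻¹ * v x ^ 2 :=
        abs_integral_mul_mul_le zero_le_one hδ
          (fun x hx => Real.rpow_pos_of_pos (by linarith [hx.1]) α) ha hE hW
    _ ≤ δ / 2 * E + M * (η * E + K * V) := by
        gcongr
        exact hHardy ε hε v v' hv hv0 hE
    _ ≤ δ * (E + (M * K + 1) / δ * V) := by
        rw [mul_add δ, ← mul_assoc, mul_div_cancel₀ _ hδ.ne']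
        nlinarith [mul_nonneg (by positivity : (0:ℝ) ≤ η) hE0]
    _ = δ * ∫ x in (0:ℝ)..1, ((x + ε) ^ α * v' x ^ 2 + (M * K + 1) / δ * V) := by
        rw [intervalIntegral.integral_add hE intervalIntegrable_const,
          intervalIntegral.integral_const, sub_zero, one_smul]

/-- Absorption estimate (2.14): for a bounded coefficient `a`, for every `δ > 0` there
is `C = C(δ,A,α)` independent of `ε`, such that
`|∫ a v′ v| ≤ δ∫(x+ε)^α|v′|² + C∫|v|²` for all `v ∈ H¹₀((0,1))`. -/
theorem absorption_estimate (α T A : ℝ) (a : ℝ → ℝ → ℝ)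
    (hα : α ∈ Set.Ioo (0:ℝ) 1) (hT : 0 < T) (hA : 0 ≤ A)
    (ha : Measurable (Function.uncurry a))
    (hbd : ∀ t ∈ Set.Ioo (0:ℝ) T,
      ∀ᵐ x ∂(volume.restrict (Set.Ioo (0:ℝ) 1)), |a x t| ≤ A) :
    ∀ δ > 0, ∃ C > 0, ∀ ε ∈ Set.Ioo (0:ℝ) 1, ∀ t ∈ Set.Ioo (0:ℝ) T,
      ∀ v v' : ℝ → ℝ,
        (∀ x ∈ Set.Icc (0:ℝ) 1, HasDerivAt v (v' x) x) →
        v 0 = 0 → v 1 = 0 →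
        IntervalIntegrable (fun x => a x t * v' x * v x) volume 0 1 →
        IntervalIntegrable (fun x => (x+ε)^α * (v' x)^2) volume 0 1 →
        IntervalIntegrable (fun x => (v x)^2) volume 0 1 →
        |∫ x in (0:ℝ)..1, a x t * v' x * v x| ≤
          δ * ∫ x in (0:ℝ)..1, (x+ε)^α * (v' x)^2
            + C * ∫ x in (0:ℝ)..1, (v x)^2 :=
  absorption_estimate_general α T A a hα hbd
end
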